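/- Let n ≥ 1, t_out ≥ 1, let Σ be a deterministic symmetric positive semidefinite n×n matrix, and let E_out = (1/t_out)·√Σ X Xᵀ √Σ where the t_out columns of X are i.i.d. copies of a rotationally invariant random vector ξ in ℝⁿ with E[ξξᵀ] = Iₙ and E[‖ξ‖⁴] < ∞; set γ = E[‖ξ‖⁴]/(n(n+2)). Let V be a random n×n orthogonal matrix independent of X, and define the holdout estimator Ξᴴ = V · Diag(Vᵀ E_out V) · Vᵀ. Then the expected normalized Frobenius error satisfies E[τ((Ξᴴ − Σ)²)] = ((3γ − 1)/t_out − 1) · E[τ(Diag(Vᵀ Σ V)²)] + τ(Σ²). (In the paper's notation, with total sample size t and train–test ratio k = t/t_out, the prefactor is (k/t)(3γ − 1) − 1.) -/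

import Mathlib

/-
Write `Uᵢ := (√Σ V)ᵀ i` for the `i`-th column of `√Σ V`. Then `(VᵀΣV)ᵢᵢ = ‖Uᵢ‖²`,
`(Vᵀ E_out V)ᵢᵢ = t_out⁻¹ ∑ₛ ⟨Uᵢ, Xₛ⟩²`, and since `Ξᴴ` is diagonal in the basis `V`,
`τ((Ξᴴ - Σ)²) = τ(Σ²) + n⁻¹ ∑ᵢ ((Vᵀ E_out V)ᵢᵢ² - 2 (Vᵀ E_out V)ᵢᵢ ‖Uᵢ‖²)`.

As `V` is independent of `X`, Fubini reduces each term to a fixed vector `u` in place of `Uᵢ`.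
A Householder reflection maps `u` to `‖u‖ e₀`, so rotation invariance gives
`⟨u, ξ⟩ ~ ‖u‖ ξ₀`. Hence `E⟨u, ξ⟩² = ‖u‖²` and `E⟨u, ξ⟩⁴ = ‖u‖⁴ E ξ₀⁴`; comparing
`(ξₐ + ξ_b)⁴` with `(ξₐ - ξ_b)⁴` gives `E ξₐ² ξ_b² = E ξ₀⁴ / 3` for `a ≠ b`, so
`E‖ξ‖⁴ = n(n+2) E ξ₀⁴ / 3`, i.e. `E ξ₀⁴ = 3γ`. For i.i.d. columns,
`E(∑ₛ ⟨u, Xₛ⟩²)² = t_out · 3γ‖u‖⁴ + t_out(t_out - 1)‖u‖⁴`, which yields the coefficient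
`(3γ - 1)/t_out - 1`.
-/

open MeasureTheory ProbabilityTheory Matrix

/-- Normalized trace `τ(A) = (1/n)·Tr(A)`. -/
noncomputable def tau (n : ℕ) (A : Matrix (Fin n) (Fin n) ℝ) : ℝ := (1 / (n : ℝ)) * A.trace

/-- `Diag(A)`: the diagonal matrix obtained from `A` by zeroing out off-diagonal entries. -/
def diagPart (n : ℕ) (A : Matrix (Fin n) (Fin n) ℝ) : Matrix (Fin n) (Fin n) ℝ :=
  Matrix.diagonal A.diag

/-- Matrices carry the product measurable structure. -/
instance matrixMeasurableSpace {m k α : Type*} [MeasurableSpace α] :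
    MeasurableSpace (Matrix m k α) :=
  inferInstanceAs (MeasurableSpace (m → k → α))

instance Matrix.borelSpace {m k : Type*} [Countable m] [Countable k] :
    BorelSpace (Matrix m k ℝ) :=
  inferInstanceAs (BorelSpace (m → k → ℝ))

theorem exists_orthogonal_transpose_mulVec_eq {ι : Type*} [Fintype ι] [DecidableEq ι]
    (u : ι → ℝ) (i₀ : ι) :
    ∃ O : Matrix ι ι ℝ, Oᵀ * O = 1 ∧ Oᵀ *ᵥ u = √(u ⬝ᵥ u) • Pi.single i₀ 1 := by
  set r := √(u ⬝ᵥ u)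
  set w := u - r • Pi.single i₀ 1
  have hr : r * r = u ⬝ᵥ u := Real.mul_self_sqrt (dotProduct_self_star_nonneg u)
  have hww : w ⬝ᵥ w = 2 * (w ⬝ᵥ u) := by
    simp only [w, sub_dotProduct, dotProduct_sub, smul_dotProduct, dotProduct_smul,
      single_dotProduct, dotProduct_single]
    simp [smul_eq_mul]
    linear_combination hr
  -- The Householder reflection in `w⊥`; it sends `u` to `r • e i₀` because
  -- `w ⬝ᵥ w = 2 * (w ⬝ᵥ u)`. If `w = 0`, then `c = 2 / 0 = 0` and `H = 1`.
  set c := 2 / (w ⬝ᵥ w)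
  set H := (1 : Matrix ι ι ℝ) - c • vecMulVec w w
  have hHt : Hᵀ = H := by simp [H, transpose_vecMulVec]
  refine ⟨H, ?_, ?_⟩
  · have hc : c * c * (w ⬝ᵥ w) = 2 * c := by
      by_cases hw : w ⬝ᵥ w = 0
      · simp [c, hw]
      · simp only [c]; field_simp
    rw [hHt]
    simp only [H, sub_mul, mul_sub, one_mul, mul_one, smul_mul_smul_comm,
      vecMulVec_mul_vecMulVec, vecMulVec_smul, smul_smul, hc]
    module
  · have hc : c * (w ⬝ᵥ u) = 1 ∨ w = 0 := by
      by_cases hw : w ⬝ᵥ u = 0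
      · exact Or.inr (dotProduct_self_eq_zero.1 (by rw [hww, hw, mul_zero]))
      · left; simp only [c, hww]; field_simp
    rw [hHt]
    simp only [H, sub_mulVec, one_mulVec, smul_mulVec, vecMulVec_mulVec, op_smul_eq_smul,
      smul_smul]
    rcases hc with hc | hw
    · rw [hc, one_smul, sub_sub_cancel]
    · rw [hw, smul_zero, sub_zero, ← sub_eq_zero]; exact hw

theorem dotProduct_self_eq_sum_sq {κ : Type*} [Fintype κ] (v : κ → ℝ) :
    v ⬝ᵥ v = ∑ t, v t ^ 2 := by
  simp [dotProduct, sq]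

theorem sq_mul_sq_le_sum_sq_sq {ι : Type*} [Fintype ι] (x : ι → ℝ) (a b : ι) :
    x a ^ 2 * x b ^ 2 ≤ (∑ i, x i ^ 2) ^ 2 := by
  have hle : ∀ c, x c ^ 2 ≤ ∑ i, x i ^ 2 := fun c =>
    Finset.single_le_sum (fun i _ => sq_nonneg (x i)) (Finset.mem_univ c)
  rw [sq (∑ i, x i ^ 2)]
  exact mul_le_mul (hle a) (hle b) (sq_nonneg _) ((sq_nonneg _).trans (hle a))

section MatrixAlgebra
variable {n : Type*} [Fintype n] [DecidableEq n] {v : Matrix n n ℝ}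

theorem trace_conj_diagonal_sub_sq (hv : vᵀ * v = 1) (d : n → ℝ) (S : Matrix n n ℝ) :
    trace ((v * diagonal d * vᵀ - S) ^ 2) =
      ∑ i, (d i ^ 2 - 2 * d i * (vᵀ * S * v) i i) + trace (S * S) := by
  have hPP : trace (v * diagonal d * vᵀ * (v * diagonal d * vᵀ)) = ∑ i, d i ^ 2 := by
    rw [show v * diagonal d * vᵀ * (v * diagonal d * vᵀ) = v * (diagonal d * (vᵀ * v) *
      diagonal d * vᵀ) by simp only [Matrix.mul_assoc], trace_mul_comm, hv]
    simp [Matrix.mul_assoc, hv, sq]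
  have hPS : trace (v * diagonal d * vᵀ * S) = ∑ i, d i * (vᵀ * S * v) i i := by
    rw [show v * diagonal d * vᵀ * S = v * (diagonal d * (vᵀ * S)) by
      simp only [Matrix.mul_assoc], trace_mul_comm, Matrix.mul_assoc (diagonal d)]
    simp [trace, diagonal_mul]
  rw [sq, sub_mul, mul_sub, mul_sub, trace_sub, trace_sub, trace_sub, hPP,
    trace_mul_comm S, hPS, Finset.sum_sub_distrib]
  simp only [mul_assoc (2 : ℝ), ← Finset.mul_sum]
  ring

theorem dotProduct_self_col_le_trace (hv : vᵀ * v = 1) (R : Matrix n n ℝ) (i : n) :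
    (R * v)ᵀ i ⬝ᵥ (R * v)ᵀ i ≤ trace (Rᵀ * R) := by
  have hsum : ∑ j, (R * v)ᵀ j ⬝ᵥ (R * v)ᵀ j = trace (Rᵀ * R) :=
    calc ∑ j, (R * v)ᵀ j ⬝ᵥ (R * v)ᵀ j = trace ((R * v)ᵀ * (R * v)) := rfl
      _ = trace (vᵀ * (Rᵀ * R * v)) := by simp only [transpose_mul, Matrix.mul_assoc]
      _ = trace (Rᵀ * R * v * vᵀ) := trace_mul_comm _ _
      _ = trace (Rᵀ * R) := by rw [Matrix.mul_assoc, mul_eq_one_comm.1 hv, Matrix.mul_one]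
  rw [← hsum]
  exact Finset.single_le_sum (fun j _ => dotProduct_self_star_nonneg _) (Finset.mem_univ i)

end MatrixAlgebra

section DiagonalEntries
variable {n κ : Type*} [Fintype n] [Fintype κ] {R : Matrix n n ℝ}

theorem conj_mul_self_apply (hR : Rᵀ = R) (v : Matrix n n ℝ) (i : n) :
    (vᵀ * (R * R) * v) i i = (R * v)ᵀ i ⬝ᵥ (R * v)ᵀ i := by
  rw [show vᵀ * (R * R) * v = (R * v)ᵀ * (R * v) by
    simp only [transpose_mul, hR, Matrix.mul_assoc]]
  rfl

theorem conj_mul_mul_transpose_mul_apply (hR : Rᵀ = R) (v : Matrix n n ℝ) (x : Matrix n κ ℝ)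
    (i : n) :
    (vᵀ * (R * x * xᵀ * R) * v) i i = ((R * v)ᵀ i ᵥ* x) ⬝ᵥ ((R * v)ᵀ i ᵥ* x) := by
  rw [show vᵀ * (R * x * xᵀ * R) * v = (R * v)ᵀ * x * ((R * v)ᵀ * x)ᵀ by
    simp only [transpose_mul, transpose_transpose, hR, Matrix.mul_assoc]]
  rfl

end DiagonalEntries

theorem tau_conj_diagPart_sub_sq {n : ℕ} {v : Matrix (Fin n) (Fin n) ℝ} (hv : vᵀ * v = 1)
    (A S : Matrix (Fin n) (Fin n) ℝ) :
    tau n ((v * diagPart n A * vᵀ - S) ^ 2) =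
      1 / n * ∑ i, (A i i ^ 2 - 2 * A i i * (vᵀ * S * v) i i) + tau n (S * S) := by
  rw [tau, tau, diagPart, trace_conj_diagonal_sub_sq hv, mul_add]
  rfl

theorem tau_diagPart_sq {n : ℕ} (A : Matrix (Fin n) (Fin n) ℝ) :
    tau n (diagPart n A ^ 2) = 1 / n * ∑ i, A i i ^ 2 := by
  simp [tau, diagPart, sq]

section IID
variable {Ω κ : Type*} [MeasurableSpace Ω] {μ : Measure Ω} [Fintype κ]

theorem integrable_sq_of_integrable_pow_four [IsFiniteMeasure μ] {ζ : Ω → ℝ}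
    (hζ : AEStronglyMeasurable ζ μ) (hζ4 : Integrable (fun ω => ζ ω ^ 4) μ) :
    Integrable (fun ω => ζ ω ^ 2) μ := by
  refine ((integrable_const 1).add hζ4).mono' (hζ.pow 2) (ae_of_all _ fun ω => ?_)
  rw [Real.norm_eq_abs, abs_of_nonneg (sq_nonneg _), Pi.add_apply]
  nlinarith [sq_nonneg (ζ ω ^ 2 - 1)]

variable {Z : κ → Ω → ℝ} {ζ : Ω → ℝ}

theorem integral_sum_sq_of_identDistrib (hZζ : ∀ s, IdentDistrib (Z s) ζ μ μ)
    (hζ2 : Integrable (fun ω => ζ ω ^ 2) μ) :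
    Integrable (fun ω => ∑ s, Z s ω ^ 2) μ ∧
      ∫ ω, ∑ s, Z s ω ^ 2 ∂μ = Fintype.card κ * ∫ ω, ζ ω ^ 2 ∂μ := by
  have hsq : ∀ s, IdentDistrib (fun ω => Z s ω ^ 2) (fun ω => ζ ω ^ 2) μ μ := fun s =>
    (hZζ s).comp (measurable_id.pow_const 2)
  have hint : ∀ s, Integrable (fun ω => Z s ω ^ 2) μ := fun s => (hsq s).integrable_iff.2 hζ2
  refine ⟨integrable_finsetSum _ fun s _ => hint s, ?_⟩
  rw [integral_finsetSum _ fun s _ => hint s]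
  simp [fun s => (hsq s).integral_eq]

theorem integral_sum_sq_sq_of_iid [IsProbabilityMeasure μ] (hZ : iIndepFun Z μ)
    (hZζ : ∀ s, IdentDistrib (Z s) ζ μ μ) (hζ : AEStronglyMeasurable ζ μ)
    (hζ4 : Integrable (fun ω => ζ ω ^ 4) μ) :
    Integrable (fun ω => (∑ s, Z s ω ^ 2) ^ 2) μ ∧
      ∫ ω, (∑ s, Z s ω ^ 2) ^ 2 ∂μ = Fintype.card κ * ∫ ω, ζ ω ^ 4 ∂μ +
        ((Fintype.card κ : ℝ) ^ 2 - Fintype.card κ) * (∫ ω, ζ ω ^ 2 ∂μ) ^ 2 := by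
  classical
  have hζ2 := integrable_sq_of_integrable_pow_four hζ hζ4
  have hsq : ∀ s, IdentDistrib (fun ω => Z s ω ^ 2) (fun ω => ζ ω ^ 2) μ μ := fun s =>
    (hZζ s).comp (measurable_id.pow_const 2)
  have hpair : ∀ s s', Integrable (fun ω => Z s ω ^ 2 * Z s' ω ^ 2) μ ∧
      ∫ ω, Z s ω ^ 2 * Z s' ω ^ 2 ∂μ = (∫ ω, ζ ω ^ 2 ∂μ) ^ 2 +
        if s = s' then ∫ ω, ζ ω ^ 4 ∂μ - (∫ ω, ζ ω ^ 2 ∂μ) ^ 2 else 0 := by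
    intro s s'
    by_cases h : s = s'
    · subst h
      have h4 : IdentDistrib (fun ω => Z s ω ^ 4) (fun ω => ζ ω ^ 4) μ μ :=
        (hZζ s).comp (measurable_id.pow_const 4)
      have hZ4 : (fun ω => Z s ω ^ 2 * Z s ω ^ 2) = fun ω => Z s ω ^ 4 := by
        funext ω; ring
      rw [hZ4, if_pos rfl, add_sub_cancel]
      exact ⟨h4.integrable_iff.2 hζ4, h4.integral_eq⟩
    · have hind : IndepFun (fun ω => Z s ω ^ 2) (fun ω => Z s' ω ^ 2) μ :=
        (hZ.indepFun h).comp (measurable_id.pow_const 2) (measurable_id.pow_const 2)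
      have hi := fun s => ((hsq s).integrable_iff.2 hζ2)
      refine ⟨hind.integrable_mul (hi s) (hi s'), ?_⟩
      rw [if_neg h, add_zero]
      exact (hind.integral_mul_eq_mul_integral (hi s).1 (hi s').1).trans
        (by rw [(hsq s).integral_eq, (hsq s').integral_eq, sq])
  have hexp : ∀ ω, (∑ s, Z s ω ^ 2) ^ 2 = ∑ s, ∑ s', Z s ω ^ 2 * Z s' ω ^ 2 := fun ω => by
    rw [sq, Finset.sum_mul_sum]
  simp_rw [hexp]
  refine ⟨integrable_finsetSum _ fun s _ => integrable_finsetSum _ fun s' _ => (hpair s s').1, ?_⟩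
  rw [integral_finsetSum _ fun s _ => integrable_finsetSum _ fun s' _ => (hpair s s').1]
  simp_rw [integral_finsetSum _ fun s' _ => (hpair _ s').1, fun s s' => (hpair s s').2]
  simp [Finset.sum_add_distrib]
  ring
end IID

theorem ProbabilityTheory.IndepFun.integral_comp_eq_of_nonneg {Ω α β : Type*}
    [MeasurableSpace Ω] [MeasurableSpace α] [MeasurableSpace β] {μ : Measure Ω}
    [IsFiniteMeasure μ] {U : Ω → α} {X : Ω → β} (hUX : IndepFun U X μ) (hU : Measurable U)
    (hX : Measurable X) {g : α → β → ℝ} (hg : Measurable (Function.uncurry g))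
    (hg0 : ∀ a b, 0 ≤ g a b) {h : α → ℝ} (hh : Measurable h)
    (hgh : ∀ a, Integrable (fun ω => g a (X ω)) μ ∧ ∫ ω, g a (X ω) ∂μ = h a)
    (hhU : Integrable (fun ω => h (U ω)) μ) :
    Integrable (fun ω => g (U ω) (X ω)) μ ∧ ∫ ω, g (U ω) (X ω) ∂μ = ∫ ω, h (U ω) ∂μ := by
  have hmap := (indepFun_iff_map_prod_eq_prod_map_map hU.aemeasurable hX.aemeasurable).1 hUX
  have hUXm : Measurable fun ω => (U ω, X ω) := hU.prodMk hX
  have hga : ∀ a, Measurable (g a) := fun a => hg.comp measurable_prodMk_left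
  have hinner : ∀ a, ∫ b, g a b ∂(μ.map X) = h a := fun a => by
    rw [integral_map hX.aemeasurable (hga a).aestronglyMeasurable, (hgh a).2]
  -- By Tonelli, the nonnegative integrand is integrable on the product since `h` is.
  have hint : Integrable (Function.uncurry g) ((μ.map U).prod (μ.map X)) := by
    rw [integrable_prod_iff hg.aestronglyMeasurable]
    refine ⟨ae_of_all _ fun a => ?_, ?_⟩
    · exact (integrable_map_measure (hga a).aestronglyMeasurable hX.aemeasurable).2 (hgh a).1
    · simp_rw [Function.uncurry_apply_pair, Real.norm_eq_abs, abs_of_nonneg (hg0 _ _), hinner]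
      exact (integrable_map_measure hh.aestronglyMeasurable hU.aemeasurable).2 hhU
  rw [← hmap] at hint
  refine ⟨(integrable_map_measure hg.aestronglyMeasurable hUXm.aemeasurable).1 hint, ?_⟩
  calc ∫ ω, g (U ω) (X ω) ∂μ = ∫ p, Function.uncurry g p ∂(μ.map fun ω => (U ω, X ω)) :=
        (integral_map hUXm.aemeasurable hg.aestronglyMeasurable).symm
    _ = ∫ a, ∫ b, g a b ∂(μ.map X) ∂(μ.map U) := by
        rw [hmap] at hint ⊢
        exact integral_prod _ hint
    _ = ∫ ω, h (U ω) ∂μ := by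
        simp_rw [hinner]
        exact integral_map hU.aemeasurable hh.aestronglyMeasurable

def IsRotationInvariant {Ω ι : Type*} [MeasurableSpace Ω] [Fintype ι] [DecidableEq ι]
    (μ : Measure Ω) (ξ : Ω → ι → ℝ) : Prop :=
  ∀ O : Matrix ι ι ℝ, Oᵀ * O = 1 → μ.map (fun ω => O *ᵥ ξ ω) = μ.map ξ

noncomputable def normalizedFourthMoment {Ω ι : Type*} [MeasurableSpace Ω] [Fintype ι]
    (μ : Measure Ω) (ξ : Ω → ι → ℝ) : ℝ :=
  (∫ ω, (∑ i, ξ ω i ^ 2) ^ 2 ∂μ) / (Fintype.card ι * (Fintype.card ι + 2))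

theorem integrable_sq_mul_sq {Ω ι : Type*} [MeasurableSpace Ω] {μ : Measure Ω} [Fintype ι]
    {ξ : Ω → ι → ℝ} (hξ : Measurable ξ) (hmom4 : Integrable (fun ω => (∑ i, ξ ω i ^ 2) ^ 2) μ)
    (a b : ι) : Integrable (fun ω => ξ ω a ^ 2 * ξ ω b ^ 2) μ := by
  refine hmom4.mono' (by fun_prop) (ae_of_all _ fun ω => ?_)
  rw [Real.norm_eq_abs, abs_of_nonneg (by positivity)]
  exact sq_mul_sq_le_sum_sq_sq (ξ ω) a b

namespace IsRotationInvariant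
variable {Ω ι : Type*} [MeasurableSpace Ω] {μ : Measure Ω} [Fintype ι] [DecidableEq ι]
  {ξ : Ω → ι → ℝ}

theorem identDistrib_dotProduct (hrot : IsRotationInvariant μ ξ) (hξ : Measurable ξ)
    (u : ι → ℝ) (i₀ : ι) :
    IdentDistrib (fun ω => u ⬝ᵥ ξ ω) (fun ω => √(u ⬝ᵥ u) * ξ ω i₀) μ μ := by
  obtain ⟨O, hO, hOu⟩ := exists_orthogonal_transpose_mulVec_eq u i₀
  have hOξ : IdentDistrib ξ (fun ω => O *ᵥ ξ ω) μ μ :=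
    ⟨hξ.aemeasurable, (by fun_prop : Measurable fun x : ι → ℝ => O *ᵥ x).comp_aemeasurable
      hξ.aemeasurable, (hrot O hO).symm⟩
  have hOξu : (fun ω => √(u ⬝ᵥ u) * ξ ω i₀) = fun ω => u ⬝ᵥ (O *ᵥ ξ ω) := by
    funext ω
    rw [dotProduct_mulVec, ← mulVec_transpose, hOu, smul_dotProduct, single_dotProduct,
      one_mul, smul_eq_mul]
  rw [hOξu]
  exact hOξ.comp (by fun_prop : Measurable fun x : ι → ℝ => u ⬝ᵥ x)

theorem integral_dotProduct_pow (hrot : IsRotationInvariant μ ξ) (hξ : Measurable ξ)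
    (u : ι → ℝ) (i₀ : ι) (k : ℕ) :
    ∫ ω, (u ⬝ᵥ ξ ω) ^ k ∂μ = √(u ⬝ᵥ u) ^ k * ∫ ω, ξ ω i₀ ^ k ∂μ := by
  calc ∫ ω, (u ⬝ᵥ ξ ω) ^ k ∂μ = ∫ ω, (√(u ⬝ᵥ u) * ξ ω i₀) ^ k ∂μ :=
        ((hrot.identDistrib_dotProduct hξ u i₀).comp (measurable_id.pow_const k)).integral_eq
    _ = √(u ⬝ᵥ u) ^ k * ∫ ω, ξ ω i₀ ^ k ∂μ := by simp_rw [mul_pow, integral_const_mul]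

theorem integrable_dotProduct_pow (hrot : IsRotationInvariant μ ξ) (hξ : Measurable ξ)
    (u : ι → ℝ) (i₀ : ι) (k : ℕ) (hk : Integrable (fun ω => ξ ω i₀ ^ k) μ) :
    Integrable (fun ω => (u ⬝ᵥ ξ ω) ^ k) μ :=
  ((hrot.identDistrib_dotProduct hξ u i₀).comp (measurable_id.pow_const k)).integrable_iff.2
    (by simpa only [Function.comp_def, id, mul_pow] using hk.const_mul (√(u ⬝ᵥ u) ^ k))

theorem integral_dotProduct_pow_four (hrot : IsRotationInvariant μ ξ) (hξ : Measurable ξ)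
    (u : ι → ℝ) (i₀ : ι) :
    ∫ ω, (u ⬝ᵥ ξ ω) ^ 4 ∂μ = (u ⬝ᵥ u) ^ 2 * ∫ ω, ξ ω i₀ ^ 4 ∂μ := by
  have hu : 0 ≤ u ⬝ᵥ u := dotProduct_self_star_nonneg u
  have hr : √(u ⬝ᵥ u) ^ 4 = (u ⬝ᵥ u) ^ 2 := by
    rw [show 4 = 2 * 2 from rfl, pow_mul, Real.sq_sqrt hu]
  rw [hrot.integral_dotProduct_pow hξ u i₀ 4, hr]

theorem integral_sq_mul_sq (hrot : IsRotationInvariant μ ξ) (hξ : Measurable ξ)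
    (hmom4 : Integrable (fun ω => (∑ i, ξ ω i ^ 2) ^ 2) μ) (a b i₀ : ι) :
    ∫ ω, ξ ω a ^ 2 * ξ ω b ^ 2 ∂μ = (if a = b then 3 else 1) / 3 * ∫ ω, ξ ω i₀ ^ 4 ∂μ := by
  have hcoord : ∀ c, ∫ ω, ξ ω c ^ 4 ∂μ = ∫ ω, ξ ω i₀ ^ 4 ∂μ := fun c => by
    simpa using hrot.integral_dotProduct_pow_four hξ (Pi.single c 1) i₀
  have hsq_sq : ∀ c ω, ξ ω c ^ 2 * ξ ω c ^ 2 = ξ ω c ^ 4 := fun c ω => by ring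
  by_cases hab : a = b
  · subst hab
    simp [hsq_sq, hcoord]
  have hi4 : Integrable (fun ω => ξ ω i₀ ^ 4) μ := by
    simpa only [hsq_sq] using integrable_sq_mul_sq hξ hmom4 i₀ i₀
  have hint := fun u => hrot.integrable_dotProduct_pow hξ u i₀ 4 hi4
  -- The fourth moments of `ξ a ± ξ b` are known by rotation invariance.
  set v : ι → ℝ := Pi.single a 1 + Pi.single b 1
  set w : ι → ℝ := Pi.single a 1 - Pi.single b 1
  have hpolar : ∫ ω, (v ⬝ᵥ ξ ω) ^ 4 + (w ⬝ᵥ ξ ω) ^ 4 ∂μ =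
      ∫ ω, 12 * (ξ ω a ^ 2 * ξ ω b ^ 2) + (2 * (Pi.single a 1 ⬝ᵥ ξ ω) ^ 4
        + 2 * (Pi.single b 1 ⬝ᵥ ξ ω) ^ 4) ∂μ := by
    refine integral_congr_ae (ae_of_all _ fun ω => ?_)
    simp only [v, w, add_dotProduct, sub_dotProduct, single_dotProduct, one_mul]
    ring
  have h12 : Integrable (fun ω => 12 * (ξ ω a ^ 2 * ξ ω b ^ 2)) μ :=
    (integrable_sq_mul_sq hξ hmom4 a b).const_mul 12
  have h2 : Integrable (fun ω => 2 * (Pi.single a 1 ⬝ᵥ ξ ω) ^ 4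
      + 2 * (Pi.single b 1 ⬝ᵥ ξ ω) ^ 4) μ := ((hint _).const_mul 2).add ((hint _).const_mul 2)
  rw [integral_add (hint _) (hint _), integral_add h12 h2,
    integral_add ((hint _).const_mul 2) ((hint _).const_mul 2), integral_const_mul,
    integral_const_mul, integral_const_mul] at hpolar
  simp only [hrot.integral_dotProduct_pow_four hξ _ i₀] at hpolar
  have hvw : v ⬝ᵥ v = 2 ∧ w ⬝ᵥ w = 2 := by
    simp [v, w, hab, Ne.symm hab]; norm_num
  simp only [hvw.1, hvw.2, single_dotProduct, Pi.single_eq_same, one_mul, if_neg hab]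
    at hpolar ⊢
  linarith

theorem integral_sum_sq_sq (hrot : IsRotationInvariant μ ξ) (hξ : Measurable ξ)
    (hmom4 : Integrable (fun ω => (∑ i, ξ ω i ^ 2) ^ 2) μ) (i₀ : ι) :
    ∫ ω, (∑ i, ξ ω i ^ 2) ^ 2 ∂μ =
      Fintype.card ι * (Fintype.card ι + 2) / 3 * ∫ ω, ξ ω i₀ ^ 4 ∂μ := by
  have hint := integrable_sq_mul_sq hξ hmom4
  have hrow : ∀ a : ι, ∑ b, (if a = b then (3 : ℝ) else 1) = Fintype.card ι + 2 := fun a => by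
    simp_rw [show ∀ b, (if a = b then (3 : ℝ) else 1) = 1 + if a = b then 2 else 0 from fun b => by
      split_ifs <;> norm_num]
    simp [Finset.sum_add_distrib]
  simp_rw [sq (∑ i, ξ _ i ^ 2), Finset.sum_mul_sum]
  rw [integral_finsetSum _ fun a _ => integrable_finsetSum _ fun b _ => hint a b]
  simp_rw [integral_finsetSum _ fun b _ => hint _ b, hrot.integral_sq_mul_sq hξ hmom4 _ _ i₀,
    ← Finset.sum_mul, ← Finset.sum_div]
  simp only [hrow, Finset.sum_const, Finset.card_univ, nsmul_eq_mul]

section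
variable [Nonempty ι]

theorem integral_dotProduct_pow_four_eq (hrot : IsRotationInvariant μ ξ)
    (hξ : Measurable ξ) (hmom4 : Integrable (fun ω => (∑ i, ξ ω i ^ 2) ^ 2) μ) (u : ι → ℝ) :
    ∫ ω, (u ⬝ᵥ ξ ω) ^ 4 ∂μ = 3 * normalizedFourthMoment μ ξ * (u ⬝ᵥ u) ^ 2 := by
  obtain ⟨i₀⟩ := ‹Nonempty ι›
  have hcard : (Fintype.card ι : ℝ) ≠ 0 := Nat.cast_ne_zero.2 Fintype.card_ne_zero
  rw [hrot.integral_dotProduct_pow_four hξ u i₀, normalizedFourthMoment,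
    hrot.integral_sum_sq_sq hξ hmom4 i₀]
  field_simp

theorem integrable_dotProduct_pow_four (hrot : IsRotationInvariant μ ξ) (hξ : Measurable ξ)
    (hmom4 : Integrable (fun ω => (∑ i, ξ ω i ^ 2) ^ 2) μ) (u : ι → ℝ) :
    Integrable (fun ω => (u ⬝ᵥ ξ ω) ^ 4) μ := by
  obtain ⟨i₀⟩ := ‹Nonempty ι›
  refine hrot.integrable_dotProduct_pow hξ u i₀ 4 ?_
  simpa only [← pow_add] using integrable_sq_mul_sq hξ hmom4 i₀ i₀

theorem integral_dotProduct_sq (hrot : IsRotationInvariant μ ξ) (hξ : Measurable ξ)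
    (hcov : ∀ i j, ∫ ω, ξ ω i * ξ ω j ∂μ = if i = j then 1 else 0) (u : ι → ℝ) :
    ∫ ω, (u ⬝ᵥ ξ ω) ^ 2 ∂μ = u ⬝ᵥ u := by
  obtain ⟨i₀⟩ := ‹Nonempty ι›
  have hu : 0 ≤ u ⬝ᵥ u := dotProduct_self_star_nonneg u
  rw [hrot.integral_dotProduct_pow hξ u i₀ 2, Real.sq_sqrt hu]
  simpa [sq] using congrArg (u ⬝ᵥ u * ·) (hcov i₀ i₀)

end

end IsRotationInvariant

section SampleCovariance
variable {Ω ι κ : Type*} [MeasurableSpace Ω] {μ : Measure Ω} [IsProbabilityMeasure μ]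
  [Fintype ι] [DecidableEq ι] [Nonempty ι] [Fintype κ] {ξ : Ω → ι → ℝ}
  {X : Ω → Matrix ι κ ℝ}

theorem integral_vecMul_dotProduct_self (hrot : IsRotationInvariant μ ξ) (hξ : Measurable ξ)
    (hmom4 : Integrable (fun ω => (∑ i, ξ ω i ^ 2) ^ 2) μ)
    (hcov : ∀ i j, ∫ ω, ξ ω i * ξ ω j ∂μ = if i = j then 1 else 0)
    (hXξ : ∀ t, IdentDistrib (fun ω i => X ω i t) ξ μ μ) (u : ι → ℝ) :
    Integrable (fun ω => (u ᵥ* X ω) ⬝ᵥ (u ᵥ* X ω)) μ ∧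
      ∫ ω, (u ᵥ* X ω) ⬝ᵥ (u ᵥ* X ω) ∂μ = Fintype.card κ * (u ⬝ᵥ u) := by
  have hZξ : ∀ t, IdentDistrib (fun ω => (u ᵥ* X ω) t) (fun ω => u ⬝ᵥ ξ ω) μ μ := fun t =>
    (hXξ t).comp (by fun_prop : Measurable fun x : ι → ℝ => u ⬝ᵥ x)
  rw [← hrot.integral_dotProduct_sq hξ hcov u]
  simp_rw [dotProduct_self_eq_sum_sq (u ᵥ* X _)]
  exact integral_sum_sq_of_identDistrib hZξ (integrable_sq_of_integrable_pow_four (by fun_prop)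
    (hrot.integrable_dotProduct_pow_four hξ hmom4 u))

theorem integral_vecMul_dotProduct_self_sq (hrot : IsRotationInvariant μ ξ) (hξ : Measurable ξ)
    (hmom4 : Integrable (fun ω => (∑ i, ξ ω i ^ 2) ^ 2) μ)
    (hcov : ∀ i j, ∫ ω, ξ ω i * ξ ω j ∂μ = if i = j then 1 else 0)
    (hX : iIndepFun (fun t ω i => X ω i t) μ)
    (hXξ : ∀ t, IdentDistrib (fun ω i => X ω i t) ξ μ μ) (u : ι → ℝ) :
    Integrable (fun ω => ((u ᵥ* X ω) ⬝ᵥ (u ᵥ* X ω)) ^ 2) μ ∧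
      ∫ ω, ((u ᵥ* X ω) ⬝ᵥ (u ᵥ* X ω)) ^ 2 ∂μ =
        Fintype.card κ * (Fintype.card κ - 1 + 3 * normalizedFourthMoment μ ξ) * (u ⬝ᵥ u) ^ 2 := by
  have hu : Measurable fun x : ι → ℝ => u ⬝ᵥ x := by fun_prop
  have hZ : iIndepFun (fun t ω => (u ᵥ* X ω) t) μ := hX.comp (fun _ => (u ⬝ᵥ ·)) fun _ => hu
  have hZξ : ∀ t, IdentDistrib (fun ω => (u ᵥ* X ω) t) (fun ω => u ⬝ᵥ ξ ω) μ μ := fun t =>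
    (hXξ t).comp hu
  obtain ⟨hint, hval⟩ := integral_sum_sq_sq_of_iid hZ hZξ (by fun_prop)
    (hrot.integrable_dotProduct_pow_four hξ hmom4 u)
  simp_rw [dotProduct_self_eq_sum_sq (u ᵥ* X _)]
  refine ⟨hint, ?_⟩
  rw [hval, hrot.integral_dotProduct_pow_four_eq hξ hmom4, hrot.integral_dotProduct_sq hξ hcov]
  ring

end SampleCovariance

section Holdout
variable {Ω ι κ : Type*} [MeasurableSpace Ω] {μ : Measure Ω} [IsProbabilityMeasure μ]
  [Fintype ι] [DecidableEq ι] [Nonempty ι] [Fintype κ] {ξ : Ω → ι → ℝ}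
  {X : Ω → Matrix ι κ ℝ}

theorem integral_holdout_error_term [Nonempty κ] (hrot : IsRotationInvariant μ ξ)
    (hξ : Measurable ξ) (hmom4 : Integrable (fun ω => (∑ i, ξ ω i ^ 2) ^ 2) μ)
    (hcov : ∀ i j, ∫ ω, ξ ω i * ξ ω j ∂μ = if i = j then 1 else 0) (hXm : Measurable X)
    (hX : iIndepFun (fun t ω i => X ω i t) μ)
    (hXξ : ∀ t, IdentDistrib (fun ω i => X ω i t) ξ μ μ) {U : Ω → ι → ℝ} (hU : Measurable U)
    (hUX : IndepFun U X μ) (hU4 : Integrable (fun ω => (U ω ⬝ᵥ U ω) ^ 2) μ) :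
    Integrable (fun ω => ((Fintype.card κ : ℝ)⁻¹ * ((U ω ᵥ* X ω) ⬝ᵥ (U ω ᵥ* X ω))) ^ 2
      - 2 * ((Fintype.card κ : ℝ)⁻¹ * ((U ω ᵥ* X ω) ⬝ᵥ (U ω ᵥ* X ω))) * (U ω ⬝ᵥ U ω)) μ ∧
    ∫ ω, ((Fintype.card κ : ℝ)⁻¹ * ((U ω ᵥ* X ω) ⬝ᵥ (U ω ᵥ* X ω))) ^ 2
      - 2 * ((Fintype.card κ : ℝ)⁻¹ * ((U ω ᵥ* X ω) ⬝ᵥ (U ω ᵥ* X ω))) * (U ω ⬝ᵥ U ω) ∂μ =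
      ((3 * normalizedFourthMoment μ ξ - 1) / Fintype.card κ - 1) *
        ∫ ω, (U ω ⬝ᵥ U ω) ^ 2 ∂μ := by
  set t : ℝ := (Fintype.card κ : ℝ)
  set γ := normalizedFourthMoment μ ξ
  have ht : t ≠ 0 := Nat.cast_ne_zero.2 Fintype.card_ne_zero
  obtain ⟨hint₁, hval₁⟩ := hUX.integral_comp_eq_of_nonneg hU hXm
    (g := fun u x => ((u ᵥ* x) ⬝ᵥ (u ᵥ* x)) ^ 2) (h := fun u => t * (t - 1 + 3 * γ) * (u ⬝ᵥ u) ^ 2)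
    (by fun_prop) (fun _ _ => sq_nonneg _) (by fun_prop)
    (integral_vecMul_dotProduct_self_sq hrot hξ hmom4 hcov hX hXξ) (hU4.const_mul _)
  obtain ⟨hint₂, hval₂⟩ := hUX.integral_comp_eq_of_nonneg hU hXm
    (g := fun u x => (u ᵥ* x) ⬝ᵥ (u ᵥ* x) * (u ⬝ᵥ u)) (h := fun u => t * (u ⬝ᵥ u) ^ 2)
    (by fun_prop) (fun _ _ => mul_nonneg (dotProduct_self_star_nonneg _)
      (dotProduct_self_star_nonneg _)) (by fun_prop)
    (fun u => by
      obtain ⟨hi, hv⟩ := integral_vecMul_dotProduct_self hrot hξ hmom4 hcov hXξ u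
      exact ⟨hi.mul_const _, by rw [integral_mul_const, hv]; ring⟩) (hU4.const_mul _)
  have hexp : ∀ ω, (t⁻¹ * ((U ω ᵥ* X ω) ⬝ᵥ (U ω ᵥ* X ω))) ^ 2
      - 2 * (t⁻¹ * ((U ω ᵥ* X ω) ⬝ᵥ (U ω ᵥ* X ω))) * (U ω ⬝ᵥ U ω) =
      t⁻¹ ^ 2 * ((U ω ᵥ* X ω) ⬝ᵥ (U ω ᵥ* X ω)) ^ 2
        - 2 * t⁻¹ * ((U ω ᵥ* X ω) ⬝ᵥ (U ω ᵥ* X ω) * (U ω ⬝ᵥ U ω)) := fun ω => by ring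
  simp_rw [hexp]
  refine ⟨(hint₁.const_mul _).sub (hint₂.const_mul _), ?_⟩
  rw [integral_sub (hint₁.const_mul _) (hint₂.const_mul _), integral_const_mul,
    integral_const_mul, hval₁, hval₂, integral_const_mul, integral_const_mul]
  field_simp
  ring

end Holdout

theorem integrable_sq_dotProduct_self_col {Ω n : Type*} [MeasurableSpace Ω] {μ : Measure Ω}
    [IsFiniteMeasure μ] [Fintype n] [DecidableEq n] {V : Ω → Matrix n n ℝ} (hV : Measurable V)
    (hVorth : ∀ ω, (V ω)ᵀ * V ω = 1) (R : Matrix n n ℝ) (i : n) :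
    Integrable (fun ω => ((R * V ω)ᵀ i ⬝ᵥ (R * V ω)ᵀ i) ^ 2) μ := by
  have hm : Measurable fun v : Matrix n n ℝ => ((R * v)ᵀ i ⬝ᵥ (R * v)ᵀ i) ^ 2 := by fun_prop
  refine .of_bound (hm.comp hV).aestronglyMeasurable (trace (Rᵀ * R) ^ 2)
    (ae_of_all _ fun ω => ?_)
  have h0 : 0 ≤ (R * V ω)ᵀ i ⬝ᵥ (R * V ω)ᵀ i := dotProduct_self_star_nonneg _
  rw [Real.norm_eq_abs, abs_pow, abs_of_nonneg h0]
  exact pow_le_pow_left₀ h0 (dotProduct_self_col_le_trace (hVorth ω) R i) 2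

theorem stmt_9_general {Ω : Type*} [MeasurableSpace Ω] (μ : Measure Ω) [IsProbabilityMeasure μ]
    (n tout : ℕ) (hn : 1 ≤ n) (htout : 1 ≤ tout)
    (S R : Matrix (Fin n) (Fin n) ℝ)
    (hR : R.PosSemidef) (hRS : R * R = S)
    (ξ : Ω → Fin n → ℝ) (hξmeas : Measurable ξ)
    (hrot : ∀ O : Matrix (Fin n) (Fin n) ℝ, Oᵀ * O = 1 →
      Measure.map (fun ω => O.mulVec (ξ ω)) μ = Measure.map ξ μ)
    (hcov : ∀ i j : Fin n, ∫ ω, ξ ω i * ξ ω j ∂μ = if i = j then (1 : ℝ) else 0)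
    (hmom4 : Integrable (fun ω => (∑ i, ξ ω i ^ 2) ^ 2) μ)
    (X : Ω → Matrix (Fin n) (Fin tout) ℝ) (hXmeas : Measurable X)
    (hindep : iIndepFun
      (fun t ω => fun i => X ω i t) μ)
    (hident : ∀ t : Fin tout, IdentDistrib (fun ω => fun i => X ω i t) ξ μ μ)
    (Eout : Ω → Matrix (Fin n) (Fin n) ℝ)
    (hEout : ∀ ω, Eout ω = ((tout : ℝ)⁻¹) • (R * X ω * (X ω)ᵀ * R))
    (V : Ω → Matrix (Fin n) (Fin n) ℝ) (hVmeas : Measurable V)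
    (hVorth : ∀ ω, (V ω)ᵀ * V ω = 1)
    (hVX : IndepFun V X μ)
    (γ : ℝ) (hγ : γ = (∫ ω, (∑ i, ξ ω i ^ 2) ^ 2 ∂μ) / ((n : ℝ) * ((n : ℝ) + 2)))
    (Xi : Ω → Matrix (Fin n) (Fin n) ℝ)
    (hXi : ∀ ω, Xi ω = V ω * diagPart n ((V ω)ᵀ * Eout ω * V ω) * (V ω)ᵀ) :
    ∫ ω, tau n ((Xi ω - S) ^ 2) ∂μ =
      ((3 * γ - 1) / (tout : ℝ) - 1) *
          ∫ ω, tau n ((diagPart n ((V ω)ᵀ * S * V ω)) ^ 2) ∂μ +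
        tau n (S * S) := by
  have : Nonempty (Fin n) := ⟨⟨0, hn⟩⟩
  have : Nonempty (Fin tout) := ⟨⟨0, htout⟩⟩
  have hRt : Rᵀ = R := hR.1.eq
  set U : Fin n → Ω → Fin n → ℝ := fun i ω => (R * V ω)ᵀ i
  have hA : ∀ ω i, ((V ω)ᵀ * Eout ω * V ω) i i =
      (tout : ℝ)⁻¹ * ((U i ω ᵥ* X ω) ⬝ᵥ (U i ω ᵥ* X ω)) := fun ω i => by
    rw [hEout, Matrix.mul_smul, Matrix.smul_mul, Matrix.smul_apply,
      conj_mul_mul_transpose_mul_apply hRt, smul_eq_mul]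
  have hW : ∀ ω i, ((V ω)ᵀ * S * V ω) i i = U i ω ⬝ᵥ U i ω := fun ω i => by
    rw [← hRS, conj_mul_self_apply hRt]
  have hW4 : ∀ i, Integrable (fun ω => (U i ω ⬝ᵥ U i ω) ^ 2) μ :=
    integrable_sq_dotProduct_self_col hVmeas hVorth R
  have hUV : ∀ i, Measurable fun v : Matrix (Fin n) (Fin n) ℝ => (R * v)ᵀ i := by fun_prop
  have hterm := fun i => integral_holdout_error_term hrot hξmeas hmom4 hcov hXmeas hindep hident
    (U := U i) ((hUV i).comp hVmeas) (hVX.comp (hUV i) measurable_id) (hW4 i)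
  simp only [Fintype.card_fin, normalizedFourthMoment, ← hγ] at hterm
  simp_rw [hXi, tau_conj_diagPart_sub_sq (hVorth _), tau_diagPart_sq, hA, hW]
  rw [integral_add ((integrable_finsetSum _ fun i _ => (hterm i).1).const_mul _)
    (integrable_const _), integral_const_mul, integral_finsetSum _ fun i _ => (hterm i).1,
    integral_const_mul, integral_finsetSum _ fun i _ => hW4 i,
    Finset.sum_congr rfl fun i _ => (hterm i).2, ← Finset.mul_sum, integral_const, probReal_univ,
    one_smul]
  ring

/-- For the test-set sample covariance `E_out = (1/t_out)·√Σ X Xᵀ √Σ` built from rotationally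
invariant noise, and a random orthogonal matrix `V` independent of the test noise:
the holdout estimator `Ξᴴ = V·Diag(Vᵀ E_out V)·Vᵀ` has expected normalized Frobenius error
`E[τ((Ξᴴ − Σ)²)] = ((3γ−1)/t_out − 1)·E[τ(Diag(Vᵀ Σ V)²)] + τ(Σ²)`,
with `γ = E[‖ξ‖⁴]/(n(n+2))`. -/
theorem stmt_9 {Ω : Type*} [MeasurableSpace Ω] (μ : Measure Ω) [IsProbabilityMeasure μ]
    (n tout : ℕ) (hn : 1 ≤ n) (htout : 1 ≤ tout)
    (S R : Matrix (Fin n) (Fin n) ℝ)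
    (hS : S.PosSemidef) (hR : R.PosSemidef) (hRS : R * R = S)
    (ξ : Ω → Fin n → ℝ) (hξmeas : Measurable ξ)
    (hrot : ∀ O : Matrix (Fin n) (Fin n) ℝ, Oᵀ * O = 1 →
      Measure.map (fun ω => O.mulVec (ξ ω)) μ = Measure.map ξ μ)
    (hcov : ∀ i j : Fin n, ∫ ω, ξ ω i * ξ ω j ∂μ = if i = j then (1 : ℝ) else 0)
    (hmom4 : Integrable (fun ω => (∑ i, ξ ω i ^ 2) ^ 2) μ)
    (X : Ω → Matrix (Fin n) (Fin tout) ℝ) (hXmeas : Measurable X)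
    (hindep : iIndepFun
      (fun t ω => fun i => X ω i t) μ)
    (hident : ∀ t : Fin tout, IdentDistrib (fun ω => fun i => X ω i t) ξ μ μ)
    (Eout : Ω → Matrix (Fin n) (Fin n) ℝ)
    (hEout : ∀ ω, Eout ω = ((tout : ℝ)⁻¹) • (R * X ω * (X ω)ᵀ * R))
    (V : Ω → Matrix (Fin n) (Fin n) ℝ) (hVmeas : Measurable V)
    (hVorth : ∀ ω, (V ω)ᵀ * V ω = 1)
    (hVX : IndepFun V X μ)
    (γ : ℝ) (hγ : γ = (∫ ω, (∑ i, ξ ω i ^ 2) ^ 2 ∂μ) / ((n : ℝ) * ((n : ℝ) + 2)))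
    (Xi : Ω → Matrix (Fin n) (Fin n) ℝ)
    (hXi : ∀ ω, Xi ω = V ω * diagPart n ((V ω)ᵀ * Eout ω * V ω) * (V ω)ᵀ) :
    ∫ ω, tau n ((Xi ω - S) ^ 2) ∂μ =
      ((3 * γ - 1) / (tout : ℝ) - 1) *
          ∫ ω, tau n ((diagPart n ((V ω)ᵀ * S * V ω)) ^ 2) ∂μ +
        tau n (S * S) :=
  stmt_9_general μ n tout hn htout S R hR hRS ξ hξmeas hrot hcov hmom4 X hXmeas hindep hident Eout
    hEout V hVmeas hVorth hVX γ hγ Xi hXi
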